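/- arXiv:2602.13474 — 5 statements merged into one kernel-verified Lean document; each statement's English description precedes it below -/
import Mathlib

section
/- Let μ₁ and μ₂ be probability measures on a common measurable space with μ₁ absolutely continuous with respect to μ₂, and let I(μ₁|μ₂) = ∫ log(dμ₁/dμ₂) dμ₁ denote the relative entropy. Then ∫ |log(dμ₁/dμ₂)| dμ₁ ≤ I(μ₁|μ₂) + √(2 I(μ₁|μ₂)). -/
/-!
Write `f = dμ₁/dμ₂`. Splitting `|log f| = log f + 2 (log f)⁻` gives
`∫ |log f| dμ₁ = I + 2 ∫ (log f)⁻ dμ₁ = I + 2 ∫ f (log f)⁻ dμ₂`. Since `t log t + 1 - t ≥ 0`,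
we have `t (log t)⁻ ≤ (1 - t)⁺`, and `2 ∫ (1 - f)⁺ dμ₂ = ∫ |f - 1| dμ₂` because `∫ (f - 1) dμ₂ = 0`.
It remains to prove Pinsker's inequality `∫ |f - 1| dμ₂ ≤ √(2 I)`. It follows from the pointwise
bound `3 (t - 1)² ≤ 2 (t + 2) (t log t + 1 - t)` by Cauchy–Schwarz, used in its AM-GM form
`|f - 1| ≤ (λ (f - 1)² / (f + 2) + (f + 2) / λ) / 2` together with `∫ (f + 2) dμ₂ = 3`.
-/

open Real Set MeasureTheory InformationTheory

noncomputable def klGap (t : ℝ) : ℝ := klFun t - 3 / 2 * ((t - 1) ^ 2 / (t + 2))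

noncomputable def klGapDeriv (t : ℝ) : ℝ := log t - 3 / 2 * ((t - 1) * (t + 5) / (t + 2) ^ 2)

lemma hasDerivAt_klGapDeriv {t : ℝ} (ht : 0 < t) :
    HasDerivAt klGapDeriv ((t - 1) ^ 2 * (t + 8) / (t * (t + 2) ^ 3)) t := by
  have ht2 : (t + 2) ^ 2 ≠ 0 := by positivity
  have h := (hasDerivAt_log ht.ne').fun_sub
    ((((hasDerivAt_id' t).sub_const 1).fun_mul ((hasDerivAt_id' t).add_const 5)).fun_div
      (((hasDerivAt_id' t).add_const 2).fun_pow 2) ht2 |>.const_mul (3 / 2))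
  refine HasDerivAt.congr_deriv (f := klGapDeriv) h ?_
  field_simp
  ring

lemma hasDerivAt_klGap {t : ℝ} (ht : 0 < t) : HasDerivAt klGap (klGapDeriv t) t := by
  have ht2 : t + 2 ≠ 0 := by positivity
  have h := (hasDerivAt_klFun ht.ne').fun_sub
    (((((hasDerivAt_id' t).sub_const 1).fun_pow 2).fun_div ((hasDerivAt_id' t).add_const 2)
      ht2).const_mul (3 / 2))
  refine HasDerivAt.congr_deriv (f := klGap) h ?_
  rw [klGapDeriv]
  field_simp
  ring

lemma monotoneOn_klGapDeriv : MonotoneOn klGapDeriv (Ioi 0) :=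
  monotoneOn_of_hasDerivWithinAt_nonneg (convex_Ioi 0)
    (fun t ht => (hasDerivAt_klGapDeriv ht).continuousAt.continuousWithinAt)
    (fun t ht => (hasDerivAt_klGapDeriv (interior_subset ht)).hasDerivWithinAt)
    (fun t ht => by have : 0 < t := interior_subset ht; positivity)

lemma continuousOn_klGap : ContinuousOn klGap (Ici 0) := by
  unfold klGap
  have := continuous_klFun
  fun_prop (disch := intro x (hx : 0 ≤ x); positivity)

/-- `klGapDeriv` is increasing and vanishes at `1`, so `klGap` decreases on `[0, 1]`, increases on
`[1, ∞)`, and its minimum is `klGap 1 = 0`. -/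
lemma klGap_nonneg {t : ℝ} (ht : 0 ≤ t) : 0 ≤ klGap t := by
  have hone : klGap 1 = 0 := by norm_num [klGap, klFun_one]
  have hderiv_one : klGapDeriv 1 = 0 := by norm_num [klGapDeriv]
  have hderiv {D : Set ℝ} (hD : D ⊆ Ioi 0) (x : ℝ) (hx : x ∈ D) :
      HasDerivWithinAt klGap (klGapDeriv x) D x :=
    (hasDerivAt_klGap (hD hx)).hasDerivWithinAt
  rcases le_total 1 t with h1 | h1
  · refine hone ▸ monotoneOn_of_hasDerivWithinAt_nonneg (convex_Ici 1)
      (continuousOn_klGap.mono fun x (hx : 1 ≤ x) => zero_le_one.trans hx)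
      (hderiv fun x hx => ?_) (fun x hx => ?_) self_mem_Ici h1 h1
    · rw [interior_Ici] at hx
      exact mem_Ioi.2 (zero_lt_one.trans hx)
    · rw [interior_Ici] at hx
      exact hderiv_one ▸ monotoneOn_klGapDeriv (mem_Ioi.2 zero_lt_one)
        (mem_Ioi.2 (zero_lt_one.trans hx)) (le_of_lt hx)
  · refine hone ▸ antitoneOn_of_hasDerivWithinAt_nonpos (convex_Icc 0 1)
      (continuousOn_klGap.mono Icc_subset_Ici_self)
      (hderiv fun x hx => ?_) (fun x hx => ?_) ⟨ht, h1⟩ ⟨zero_le_one, le_rfl⟩ h1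
    · rw [interior_Icc] at hx
      exact hx.1
    · rw [interior_Icc] at hx
      exact hderiv_one ▸ monotoneOn_klGapDeriv hx.1 (mem_Ioi.2 zero_lt_one) hx.2.le

lemma three_halves_mul_sq_div_le_klFun {t : ℝ} (ht : 0 ≤ t) :
    3 / 2 * ((t - 1) ^ 2 / (t + 2)) ≤ klFun t :=
  sub_nonneg.1 (klGap_nonneg ht)

lemma abs_eq_add_two_mul_max_neg (x : ℝ) : |x| = x + 2 * max (-x) 0 := by
  rcases le_total 0 x with hx | hx
  · rw [abs_of_nonneg hx, max_eq_right (neg_nonpos.2 hx)]; ring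
  · rw [abs_of_nonpos hx, max_eq_left (neg_nonneg.2 hx)]; ring

lemma mul_max_neg_log_le {t : ℝ} (ht : 0 ≤ t) : t * max (-log t) 0 ≤ max (-(t - 1)) 0 := by
  rcases le_total 0 (log t) with hlog | hlog
  · rw [max_eq_right (neg_nonpos.2 hlog), mul_zero]
    exact le_max_right _ _
  · rw [max_eq_left (neg_nonneg.2 hlog)]
    have := klFun_nonneg ht
    rw [klFun_apply] at this
    exact le_max_of_le_left (by linarith)

lemma abs_le_half_mul_sq_div_add {x c l : ℝ} (hc : 0 < c) (hl : 0 < l) :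
    |x| ≤ (l * (x ^ 2 / c) + c / l) / 2 := by
  have key : (l * (x ^ 2 / c) + c / l) / 2 - |x| = (l * |x| - c) ^ 2 / (2 * l * c) := by
    rw [← sq_abs x]
    field_simp
    ring
  have : 0 ≤ (l * |x| - c) ^ 2 / (2 * l * c) := by positivity
  linarith

lemma le_sqrt_of_forall_le_half_add {T a b : ℝ} (hb : 0 < b)
    (h : ∀ l > 0, T ≤ (l * a + b / l) / 2) : T ≤ √(a * b) := by
  rcases le_or_gt T 0 with hT | hT
  · exact hT.trans (sqrt_nonneg _)
  have := h (b / T) (by positivity)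
  rw [div_div_cancel₀ hb.ne'] at this
  have hTa : T * T ≤ b * a := by
    rw [← le_div_iff₀ hT, ← div_mul_eq_mul_div]
    linarith
  exact le_sqrt_of_sq_le (by linarith)

lemma integral_abs_eq_integral_add_two_mul {α : Type*} [MeasurableSpace α] {μ : Measure α}
    {f : α → ℝ} (hf : Integrable f μ) :
    ∫ x, |f x| ∂μ = ∫ x, f x ∂μ + 2 * ∫ x, max (-f x) 0 ∂μ := by
  simp_rw [abs_eq_add_two_mul_max_neg (f _)]
  rw [integral_add hf (hf.neg_part.const_mul 2), integral_const_mul]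

section RadonNikodym

variable {α : Type*} [MeasurableSpace α] {μ ν : Measure α}

lemma integral_max_neg_llr_le [IsFiniteMeasure μ] [IsFiniteMeasure ν] (hμν : μ ≪ ν)
    (h_int : Integrable (llr μ ν) μ) :
    ∫ x, max (-llr μ ν x) 0 ∂μ ≤ ∫ x, max (-((μ.rnDeriv ν x).toReal - 1)) 0 ∂ν := by
  rw [← integral_rnDeriv_smul hμν]
  refine integral_mono ?_ ?_ fun x => mul_max_neg_log_le ENNReal.toReal_nonneg
  · exact (integrable_rnDeriv_smul_iff hμν).2 h_int.neg_part
  · exact (Measure.integrable_toReal_rnDeriv.sub (integrable_const 1)).neg_part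

variable [IsProbabilityMeasure μ] [IsProbabilityMeasure ν]

lemma integral_rnDeriv_sub_one (hμν : μ ≪ ν) : ∫ x, ((μ.rnDeriv ν x).toReal - 1) ∂ν = 0 := by
  rw [integral_sub Measure.integrable_toReal_rnDeriv (integrable_const 1),
    Measure.integral_toReal_rnDeriv hμν]
  simp

lemma integral_abs_rnDeriv_sub_one (hμν : μ ≪ ν) :
    ∫ x, |(μ.rnDeriv ν x).toReal - 1| ∂ν = 2 * ∫ x, max (-((μ.rnDeriv ν x).toReal - 1)) 0 ∂ν := by
  rw [integral_abs_eq_integral_add_two_mul (f := fun x => (μ.rnDeriv ν x).toReal - 1)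
    (Measure.integrable_toReal_rnDeriv.sub (integrable_const 1)), integral_rnDeriv_sub_one hμν,
    zero_add]

lemma integrable_sq_rnDeriv_sub_one_div (hμν : μ ≪ ν) (h_int : Integrable (llr μ ν) μ) :
    Integrable (fun x => ((μ.rnDeriv ν x).toReal - 1) ^ 2 / ((μ.rnDeriv ν x).toReal + 2)) ν := by
  refine (((integrable_klFun_rnDeriv_iff hμν).2 h_int).const_mul (2 / 3)).mono' ?_ ?_
  · have := (Measure.measurable_rnDeriv μ ν).ennreal_toReal
    exact (by fun_prop : Measurable _).aestronglyMeasurable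
  · filter_upwards with x
    have ht : 0 ≤ (μ.rnDeriv ν x).toReal := ENNReal.toReal_nonneg
    rw [Real.norm_of_nonneg (by positivity)]
    linarith [three_halves_mul_sq_div_le_klFun ht]

lemma three_halves_mul_integral_sq_div_le (hμν : μ ≪ ν) (h_int : Integrable (llr μ ν) μ) :
    3 / 2 * ∫ x, ((μ.rnDeriv ν x).toReal - 1) ^ 2 / ((μ.rnDeriv ν x).toReal + 2) ∂ν
      ≤ ∫ x, llr μ ν x ∂μ := by
  calc 3 / 2 * ∫ x, ((μ.rnDeriv ν x).toReal - 1) ^ 2 / ((μ.rnDeriv ν x).toReal + 2) ∂ν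
      = ∫ x, 3 / 2 * (((μ.rnDeriv ν x).toReal - 1) ^ 2 / ((μ.rnDeriv ν x).toReal + 2)) ∂ν :=
        (integral_const_mul _ _).symm
    _ ≤ ∫ x, klFun (μ.rnDeriv ν x).toReal ∂ν :=
        integral_mono ((integrable_sq_rnDeriv_sub_one_div hμν h_int).const_mul _)
          ((integrable_klFun_rnDeriv_iff hμν).2 h_int)
          fun x => three_halves_mul_sq_div_le_klFun ENNReal.toReal_nonneg
    _ = ∫ x, llr μ ν x ∂μ := by simp [integral_klFun_rnDeriv hμν h_int]

lemma integral_abs_rnDeriv_sub_one_le_half_add (hμν : μ ≪ ν) (h_int : Integrable (llr μ ν) μ)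
    {l : ℝ} (hl : 0 < l) :
    ∫ x, |(μ.rnDeriv ν x).toReal - 1| ∂ν ≤
      (l * ∫ x, ((μ.rnDeriv ν x).toReal - 1) ^ 2 / ((μ.rnDeriv ν x).toReal + 2) ∂ν + 3 / l) / 2 :=
    by
  have h_chi := integrable_sq_rnDeriv_sub_one_div hμν h_int
  have h_add : Integrable (fun x => (μ.rnDeriv ν x).toReal + 2) ν :=
    Measure.integrable_toReal_rnDeriv.add (integrable_const 2)
  have h_mass : ∫ x, ((μ.rnDeriv ν x).toReal + 2) ∂ν = 3 := by
    rw [integral_add Measure.integrable_toReal_rnDeriv (integrable_const 2),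
      Measure.integral_toReal_rnDeriv hμν]
    norm_num
  calc ∫ x, |(μ.rnDeriv ν x).toReal - 1| ∂ν
      ≤ ∫ x, (l * (((μ.rnDeriv ν x).toReal - 1) ^ 2 / ((μ.rnDeriv ν x).toReal + 2))
          + ((μ.rnDeriv ν x).toReal + 2) / l) / 2 ∂ν :=
        integral_mono (Measure.integrable_toReal_rnDeriv.sub (integrable_const 1)).abs
          (((h_chi.const_mul l).add (h_add.div_const l)).div_const 2)
          fun x => abs_le_half_mul_sq_div_add (by positivity) hl
    _ = _ := by
        rw [integral_div, integral_add (h_chi.const_mul l) (h_add.div_const l), integral_const_mul,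
          integral_div, h_mass]

lemma integral_abs_rnDeriv_sub_one_le_sqrt (hμν : μ ≪ ν) (h_int : Integrable (llr μ ν) μ) :
    ∫ x, |(μ.rnDeriv ν x).toReal - 1| ∂ν ≤ √(2 * ∫ x, llr μ ν x ∂μ) := by
  refine (le_sqrt_of_forall_le_half_add three_pos
    fun l hl => integral_abs_rnDeriv_sub_one_le_half_add hμν h_int hl).trans (sqrt_le_sqrt ?_)
  linarith [three_halves_mul_integral_sq_div_le hμν h_int]

end RadonNikodym

/-- For probability measures `μ₁ ≪ μ₂` with finite relative entropy
`I = ∫ log(dμ₁/dμ₂) dμ₁`, one has `∫ |log(dμ₁/dμ₂)| dμ₁ ≤ I + √(2 I)`. -/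
theorem stmt0 {α : Type*} [MeasurableSpace α] (μ₁ μ₂ : Measure α)
    [IsProbabilityMeasure μ₁] [IsProbabilityMeasure μ₂] (hac : μ₁ ≪ μ₂)
    (hint : Integrable (fun x => Real.log ((μ₁.rnDeriv μ₂ x).toReal)) μ₁)
    (I : ℝ) (hI : I = ∫ x, Real.log ((μ₁.rnDeriv μ₂ x).toReal) ∂μ₁) :
    ∫ x, |Real.log ((μ₁.rnDeriv μ₂ x).toReal)| ∂μ₁ ≤ I + Real.sqrt (2 * I) := by
  change Integrable (llr μ₁ μ₂) μ₁ at hint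
  change I = ∫ x, llr μ₁ μ₂ x ∂μ₁ at hI
  calc ∫ x, |llr μ₁ μ₂ x| ∂μ₁ = I + 2 * ∫ x, max (-llr μ₁ μ₂ x) 0 ∂μ₁ := by
        rw [integral_abs_eq_integral_add_two_mul hint, hI]
    _ ≤ I + ∫ x, |(μ₁.rnDeriv μ₂ x).toReal - 1| ∂μ₂ := by
        rw [integral_abs_rnDeriv_sub_one hac]
        gcongr
        exact integral_max_neg_llr_le hac hint
    _ ≤ I + √(2 * I) := by
        rw [hI]
        gcongr
        exact integral_abs_rnDeriv_sub_one_le_sqrt hac hint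
end

section
/- If N is a Poisson random variable with parameter λ > 0, then for every natural number k ≥ 1, E[N^k]^{1/k} ≤ k / log(1 + k/λ). -/
/-!
For `x ≥ 0` and `t > 0`, `e y ≤ e ^ y` at `y = t x / k` gives
`x ^ k ≤ (k / (e t)) ^ k e ^ (t x)`,
so `E[N ^ k] ≤ (k / (e t)) ^ k E[e ^ (t N)] = (k / (e t)) ^ k exp (λ (e ^ t - 1))`.
Choosing `e ^ t = 1 + k / λ` makes the last factor `e ^ k`, whence `E[N ^ k] ≤ (k / t) ^ k`.

`N` is not assumed measurable; since its fibres carry total mass one they are null measurable,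
which is enough to compute `E[N ^ k]` as a series.
-/

open MeasureTheory ENNReal Real Nat

namespace MeasureTheory

variable {Ω α : Type*} [MeasurableSpace Ω] {μ : Measure Ω}

lemma nullMeasurableSet_of_measure_add_measure_compl_le [IsFiniteMeasure μ] {s : Set Ω}
    (h : μ s + μ sᶜ ≤ μ Set.univ) : NullMeasurableSet s μ := by
  set t := toMeasurable μ s
  set u := toMeasurable μ sᶜ
  have hcover : t ∪ u = Set.univ :=
    Set.eq_univ_of_forall fun ω ↦ (em (ω ∈ s)).imp (subset_toMeasurable μ s ·)
      (subset_toMeasurable μ sᶜ ·)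
  have hoverlap : μ (t ∩ u) = 0 := by
    have hsum := measure_union_add_inter (μ := μ) t (measurableSet_toMeasurable μ sᶜ)
    rw [hcover, measure_toMeasurable, measure_toMeasurable] at hsum
    exact nonpos_iff_eq_zero.1 <| ENNReal.le_of_add_le_add_left (measure_ne_top μ _)
      (by rw [hsum, add_zero]; exact h)
  refine (measurableSet_toMeasurable μ s).nullMeasurableSet.congr (ae_eq_set.2 ⟨?_, ?_⟩)
  · refine measure_mono_null (fun ω hω ↦ ?_) hoverlap
    exact ⟨hω.1, subset_toMeasurable μ sᶜ hω.2⟩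
  · simp [Set.sdiff_eq_empty.2 (subset_toMeasurable μ s)]

variable [Countable α] [MeasurableSpace α] {X : Ω → α}

lemma nullMeasurable_of_tsum_measure_preimage_singleton [IsFiniteMeasure μ]
    (hX : ∑' a, μ (X ⁻¹' {a}) = μ Set.univ) : NullMeasurable X μ := by
  have hfiber (a : α) : NullMeasurableSet (X ⁻¹' {a}) μ := by
    refine nullMeasurableSet_of_measure_add_measure_compl_le ?_
    calc μ (X ⁻¹' {a}) + μ (X ⁻¹' {a})ᶜ
        ≤ ∑' b : ({a} : Set α), μ (X ⁻¹' {(b : α)})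
            + ∑' b : ({a}ᶜ : Set α), μ (X ⁻¹' {(b : α)}) := by
          rw [tsum_singleton a fun b ↦ μ (X ⁻¹' {b}), ← Set.preimage_compl,
            ← Set.biUnion_preimage_singleton X {a}ᶜ]
          gcongr
          exact measure_biUnion_le μ (Set.to_countable _) _
      _ = μ Set.univ := by
          rw [ENNReal.summable.tsum_add_tsum_compl (f := fun b ↦ μ (X ⁻¹' {b})) (s := {a})
            ENNReal.summable, hX]
  intro s _
  rw [← Set.biUnion_preimage_singleton]
  exact .biUnion (Set.to_countable s) fun a _ ↦ hfiber a

lemma lintegral_comp_eq_tsum_of_tsum_measure_preimage_singleton [MeasurableSingletonClass α]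
    [IsFiniteMeasure μ] (hX : ∑' a, μ (X ⁻¹' {a}) = μ Set.univ) (f : α → ℝ≥0∞) :
    ∫⁻ ω, f (X ω) ∂μ = ∑' a, f a * μ (X ⁻¹' {a}) := by
  have hXm := (nullMeasurable_of_tsum_measure_preimage_singleton hX).aemeasurable
  rw [← lintegral_map' (measurable_of_countable f).aemeasurable hXm, lintegral_countable']
  simp_rw [Measure.map_apply_of_aemeasurable hXm (measurableSet_singleton _)]

end MeasureTheory

lemma Real.pow_le_mul_exp_mul {x t : ℝ} (hx : 0 ≤ x) (ht : 0 < t) (k : ℕ) :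
    x ^ k ≤ (k / (exp 1 * t)) ^ k * exp (t * x) := by
  rcases k.eq_zero_or_pos with rfl | hk
  · simpa using one_le_exp (by positivity)
  have hk' : (0 : ℝ) < k := by exact_mod_cast hk
  calc x ^ k = (k / (exp 1 * t)) ^ k * (exp 1 * (t * x / k)) ^ k := by
        rw [← mul_pow]; congr 1; field_simp
    _ ≤ (k / (exp 1 * t)) ^ k * exp (t * x / k) ^ k := by gcongr; exact exp_one_mul_le_exp
    _ = (k / (exp 1 * t)) ^ k * exp (t * x) := by rw [← exp_nat_mul]; congr 2; field_simp

lemma hasSum_exp_mul_poisson (lam t : ℝ) :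
    HasSum (fun n : ℕ ↦ exp (t * n) * (exp (-lam) * lam ^ n / n !))
      (exp (lam * (exp t - 1))) := by
  convert! (NormedSpace.expSeries_div_hasSum_exp (lam * exp t)).mul_left (exp (-lam)) using 1
  · ext n; rw [mul_pow, mul_comm t, exp_nat_mul]; ring
  · rw [← exp_eq_exp_ℝ, ← exp_add]; ring_nf

lemma hasSum_poisson (lam : ℝ) : HasSum (fun n : ℕ ↦ exp (-lam) * lam ^ n / n !) 1 := by
  simpa using hasSum_exp_mul_poisson lam 0

lemma lintegral_pow_le_of_poisson {Ω : Type*} [MeasurableSpace Ω] (P : Measure Ω)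
    [IsProbabilityMeasure P] {lam : ℝ} (hlam : 0 ≤ lam) (N : Ω → ℕ)
    (hN : ∀ n : ℕ, P {ω | N ω = n} = ENNReal.ofReal (exp (-lam) * lam ^ n / n !))
    (k : ℕ) {t : ℝ} (ht : 0 < t) :
    ∫⁻ ω, (N ω : ℝ≥0∞) ^ k ∂P
      ≤ ENNReal.ofReal ((k / (exp 1 * t)) ^ k * exp (lam * (exp t - 1))) := by
  have hp (n : ℕ) : 0 ≤ exp (-lam) * lam ^ n / n ! := by positivity
  have hfibers : ∑' n, P (N ⁻¹' {n}) = P Set.univ := by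
    change ∑' n, P {ω | N ω = n} = _
    simp_rw [measure_univ, hN]
    rw [← ENNReal.ofReal_tsum_of_nonneg hp (hasSum_poisson lam).summable,
      (hasSum_poisson lam).tsum_eq, ofReal_one]
  set C := ((k : ℝ) / (exp 1 * t)) ^ k
  have hmgf := hasSum_exp_mul_poisson lam t
  calc ∫⁻ ω, (N ω : ℝ≥0∞) ^ k ∂P = ∑' n : ℕ, (n : ℝ≥0∞) ^ k * P (N ⁻¹' {n}) :=
        lintegral_comp_eq_tsum_of_tsum_measure_preimage_singleton hfibers
          fun n ↦ (n : ℝ≥0∞) ^ k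
    _ ≤ ∑' n : ℕ, ENNReal.ofReal (C * (exp (t * n) * (exp (-lam) * lam ^ n / n !))) := by
        refine ENNReal.tsum_le_tsum fun n ↦ ?_
        rw [show P (N ⁻¹' {n}) = _ from hN n, ← ENNReal.ofReal_natCast,
          ← ENNReal.ofReal_pow n.cast_nonneg, ← ENNReal.ofReal_mul (by positivity),
          ← mul_assoc]
        exact ENNReal.ofReal_le_ofReal <|
          mul_le_mul_of_nonneg_right (pow_le_mul_exp_mul n.cast_nonneg ht k) (hp n)
    _ = ENNReal.ofReal (C * exp (lam * (exp t - 1))) := by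
        rw [← ENNReal.ofReal_tsum_of_nonneg (fun n ↦ by positivity) (hmgf.summable.mul_left C),
          tsum_mul_left, hmgf.tsum_eq]

/-- if `N` is a Poisson random variable with parameter `λ > 0`, then for
every `k ≥ 1`, `E[N^k]^{1/k} ≤ k / log(1 + k/λ)`. -/
theorem stmt3 {Ω : Type*} [MeasurableSpace Ω] (P : Measure Ω) [IsProbabilityMeasure P]
    (lam : ℝ) (hlam : 0 < lam) (N : Ω → ℕ)
    (hN : ∀ n : ℕ, P {ω | N ω = n}
      = ENNReal.ofReal (Real.exp (-lam) * lam ^ n / n.factorial))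
    (k : ℕ) (hk : 1 ≤ k) :
    ((∫⁻ ω, (N ω : ℝ≥0∞) ^ k ∂P).toReal) ^ ((1 : ℝ) / k)
      ≤ k / Real.log (1 + k / lam) := by
  have hk₀ : (0 : ℝ) < k := by exact_mod_cast hk
  set t := log (1 + k / lam)
  have ht : 0 < t := log_pos (by linarith [div_pos hk₀ hlam])
  have hexponent : lam * (exp t - 1) = k := by
    rw [exp_log (by positivity)]; field_simp; ring
  have hmoment : (∫⁻ ω, (N ω : ℝ≥0∞) ^ k ∂P).toReal ≤ (k / t) ^ k := by
    refine ENNReal.toReal_le_of_le_ofReal (by positivity)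
      ((lintegral_pow_le_of_poisson P hlam.le N hN k ht).trans_eq ?_)
    rw [hexponent, ← exp_one_pow, ← mul_pow]
    congr 2
    field_simp
  calc ((∫⁻ ω, (N ω : ℝ≥0∞) ^ k ∂P).toReal) ^ ((1 : ℝ) / k)
      ≤ ((k / t) ^ k) ^ ((1 : ℝ) / k) := by gcongr
    _ = k / t := by rw [one_div, Real.pow_rpow_inv_natCast (by positivity) (by omega)]
end

section
/- Let X ≥ 1 be a random variable with E[X] < ∞ and let g : [0,∞) → [0,∞) be increasing with g(x)/x → ∞ as x → ∞. Then there exists a positive, increasing, convex function f with f(x)/x → ∞ as x → ∞, E[f(X)] < ∞, f(x)/g(x) → 0 as x → ∞, and such that y·f(x) ≤ f(x·y) ≤ 3·f(x)·f(y) for all x, y ≥ 1. -/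
/-!
Take `f x = x + ∑ₙ (x - aₙ)⁺` for breakpoints with `2 ≤ aₙ` and `aₙ² ≤ aₙ₊₁`. It is convex
and piecewise linear with slope `k + 2` on `[aₖ, aₖ₊₁)`, and since the breakpoints at least double,
`(k + 2) x / 2 ≤ f x ≤ (k + 2) x` there. For `1 ≤ x ≤ y < a_N` we get `x y ≤ y² < a_N² ≤ a_{N+1}`,
so the product crosses at most one breakpoint more than `y`, whence `f (x y) ≤ 3 f x f y`.
Choosing `aₙ` beyond the point where `E (X - t)⁺ ≤ 2⁻ⁿ` gives `E f(X) ≤ E X + ∑ₙ 2⁻ⁿ`, and beyond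
the point where `g x / x ≥ (n + 2) 2ⁿ` gives `f x / g x ≤ 2⁻ⁿ` on `[aₙ, aₙ₊₁)`.
-/

open MeasureTheory Filter Topology

structure IsSqLacunary (a : ℕ → ℝ) : Prop where
  two_le : ∀ n, 2 ≤ a n
  sq_le_succ : ∀ n, a n ^ 2 ≤ a (n + 1)

noncomputable def hingeSum (a : ℕ → ℝ) (x : ℝ) : ℝ := x + ∑' n, max (x - a n) 0

theorem le_hingeSum (a : ℕ → ℝ) (x : ℝ) : x ≤ hingeSum a x :=
  le_add_of_nonneg_right (tsum_nonneg fun _ => le_max_right _ _)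

theorem exists_isSqLacunary_ge (b : ℕ → ℝ) : ∃ a, IsSqLacunary a ∧ ∀ n, b n ≤ a n := by
  let a : ℕ → ℝ := fun n =>
    Nat.rec (max 2 (b 0)) (fun m am => max (am ^ 2) (max 2 (b (m + 1)))) n
  have two_le_ge : ∀ n, 2 ≤ a n ∧ b n ≤ a n
    | 0 => ⟨le_max_left _ _, le_max_right _ _⟩
    | _ + 1 => ⟨le_max_of_le_right (le_max_left _ _), le_max_of_le_right (le_max_right _ _)⟩
  exact ⟨a, ⟨fun n => (two_le_ge n).1, fun _ => le_max_left _ _⟩, fun n => (two_le_ge n).2⟩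

theorem convexOn_tsum {ι E : Type*} [AddCommMonoid E] [Module ℝ E] {s : Set E}
    {f : ι → E → ℝ} (hs : Convex ℝ s) (hf : ∀ i, ConvexOn ℝ s (f i))
    (hsum : ∀ x ∈ s, Summable fun i => f i x) : ConvexOn ℝ s fun x => ∑' i, f i x := by
  refine ⟨hs, fun x hx y hy p q hp hq hpq => ?_⟩
  simp only [smul_eq_mul]
  calc ∑' i, f i (p • x + q • y) ≤ ∑' i, (p * f i x + q * f i y) :=
        Summable.tsum_le_tsum (fun i => (hf i).2 hx hy hp hq hpq) (hsum _ (hs hx hy hp hq hpq))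
          (((hsum x hx).mul_left p).add ((hsum y hy).mul_left q))
    _ = p * ∑' i, f i x + q * ∑' i, f i y := by
        rw [Summable.tsum_add ((hsum x hx).mul_left p) ((hsum y hy).mul_left q), tsum_mul_left,
          tsum_mul_left]

namespace IsSqLacunary

variable {a : ℕ → ℝ} {x y : ℝ} {m N : ℕ}

theorem nonneg (ha : IsSqLacunary a) (n : ℕ) : 0 ≤ a n := by linarith [ha.two_le n]

theorem two_mul_le_succ (ha : IsSqLacunary a) (n : ℕ) : 2 * a n ≤ a (n + 1) := by
  nlinarith [ha.two_le n, ha.sq_le_succ n]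

theorem monotone (ha : IsSqLacunary a) : Monotone a :=
  monotone_nat_of_le_succ fun n => by linarith [ha.two_mul_le_succ n, ha.two_le n]

theorem natCast_le (ha : IsSqLacunary a) : ∀ n : ℕ, (n : ℝ) ≤ a n
  | 0 => by simpa using ha.nonneg 0
  | n + 1 => by push_cast; linarith [ha.natCast_le n, ha.two_mul_le_succ n, ha.two_le n]

theorem exists_forall_le_lt (ha : IsSqLacunary a) (x : ℝ) :
    ∃ N, (∀ k < N, a k ≤ x) ∧ x < a N := by
  have h : ∃ n, x < a n :=
    ((tendsto_atTop_mono ha.natCast_le tendsto_natCast_atTop_atTop).eventually_gt_atTop x).exists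
  exact ⟨Nat.find h, fun k hk => not_lt.1 (Nat.find_min h hk), Nat.find_spec h⟩

theorem hinge_eq_zero (ha : IsSqLacunary a) (hx : x < a N) {n : ℕ} (hn : N ≤ n) :
    max (x - a n) 0 = 0 :=
  max_eq_right (by linarith [ha.monotone hn])

theorem summable_hinge (ha : IsSqLacunary a) (x : ℝ) : Summable fun n => max (x - a n) 0 := by
  obtain ⟨N, -, hN⟩ := ha.exists_forall_le_lt x
  exact summable_of_ne_finset_zero (s := Finset.range N) fun n hn =>
    ha.hinge_eq_zero hN (by simpa using hn)

theorem hingeSum_eq_sum (ha : IsSqLacunary a) (hx : x < a N) :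
    hingeSum a x = x + ∑ n ∈ Finset.range N, max (x - a n) 0 := by
  rw [hingeSum, tsum_eq_sum (s := Finset.range N) fun n hn =>
    ha.hinge_eq_zero hx (by simpa using hn)]

theorem hingeSum_le (ha : IsSqLacunary a) (hx₀ : 0 ≤ x) (hx : x < a N) :
    hingeSum a x ≤ (N + 1) * x := by
  have hsum : ∑ n ∈ Finset.range N, max (x - a n) 0 ≤ ∑ n ∈ Finset.range N, x :=
    Finset.sum_le_sum fun n _ => max_le (by linarith [ha.nonneg n]) hx₀
  rw [ha.hingeSum_eq_sum hx]
  simp only [Finset.sum_const, Finset.card_range, nsmul_eq_mul] at hsum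
  linarith

theorem le_hingeSum_of_le (ha : IsSqLacunary a) (hx : a m ≤ x) :
    (m + 2) * x / 2 ≤ hingeSum a x := by
  have hterm : ∀ n ∈ Finset.range m, x / 2 ≤ max (x - a n) 0 := fun n hn => by
    have := ha.monotone (Finset.mem_range.1 hn : n + 1 ≤ m)
    linarith [ha.two_mul_le_succ n, le_max_left (x - a n) 0]
  calc (m + 2) * x / 2 = x + ∑ n ∈ Finset.range m, x / 2 := by simp; ring
    _ ≤ x + ∑ n ∈ Finset.range m, max (x - a n) 0 := add_le_add le_rfl (Finset.sum_le_sum hterm)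
    _ ≤ hingeSum a x := add_le_add le_rfl
        (Summable.sum_le_tsum _ (fun n _ => le_max_right _ _) (ha.summable_hinge x))

theorem add_two_mul_le_three_mul_hingeSum (ha : IsSqLacunary a) (hx : 0 ≤ x)
    (hN : ∀ k < N, a k ≤ x) : (N + 2) * x ≤ 3 * hingeSum a x := by
  cases N with
  | zero => push_cast; linarith [le_hingeSum a x]
  | succ m =>
    have := ha.le_hingeSum_of_le (hN m m.lt_succ_self)
    push_cast
    nlinarith [mul_nonneg m.cast_nonneg hx]

theorem monotone_tsum_hinge (ha : IsSqLacunary a) : Monotone fun x => ∑' n, max (x - a n) 0 :=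
  fun x y hxy => Summable.tsum_le_tsum (fun _ => max_le_max (sub_le_sub_right hxy _) le_rfl)
    (ha.summable_hinge x) (ha.summable_hinge y)

theorem monotone_hingeSum (ha : IsSqLacunary a) : Monotone (hingeSum a) :=
  monotone_id.add ha.monotone_tsum_hinge

theorem convexOn_hingeSum (ha : IsSqLacunary a) : ConvexOn ℝ Set.univ (hingeSum a) :=
  (convexOn_id convex_univ).add <| convexOn_tsum convex_univ
    (fun n => ((convexOn_id convex_univ).sub (concaveOn_const (a n) convex_univ)).sup
      (convexOn_const 0 convex_univ))
    fun x _ => ha.summable_hinge x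

theorem mul_hingeSum_le (ha : IsSqLacunary a) (hy : 1 ≤ y) (x : ℝ) :
    y * hingeSum a x ≤ hingeSum a (x * y) := by
  have hterm : ∀ n, y * max (x - a n) 0 ≤ max (x * y - a n) 0 := fun n => by
    rw [mul_max_of_nonneg _ _ (by linarith), mul_zero]
    exact max_le_max (by nlinarith [ha.nonneg n]) le_rfl
  calc y * hingeSum a x = x * y + ∑' n, y * max (x - a n) 0 := by
        rw [hingeSum, mul_add, tsum_mul_left, mul_comm]
    _ ≤ hingeSum a (x * y) := add_le_add le_rfl
        (Summable.tsum_le_tsum hterm ((ha.summable_hinge x).mul_left y) (ha.summable_hinge _))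

theorem hingeSum_mul_le_of_le (ha : IsSqLacunary a) (hx : 1 ≤ x) (hxy : x ≤ y) :
    hingeSum a (x * y) ≤ 3 * hingeSum a x * hingeSum a y := by
  obtain ⟨N, hle, hlt⟩ := ha.exists_forall_le_lt y
  have hy₀ : 0 ≤ y := by linarith
  have hxy_lt : x * y < a (N + 1) := calc
    x * y ≤ y ^ 2 := by nlinarith
    _ < a N ^ 2 := pow_lt_pow_left₀ hlt hy₀ two_ne_zero
    _ ≤ a (N + 1) := ha.sq_le_succ N
  calc hingeSum a (x * y) ≤ ((N + 1 : ℕ) + 1) * (x * y) := ha.hingeSum_le (by positivity) hxy_lt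
    _ = x * ((N + 2) * y) := by push_cast; ring
    _ ≤ hingeSum a x * (3 * hingeSum a y) :=
        mul_le_mul (le_hingeSum a x) (ha.add_two_mul_le_three_mul_hingeSum hy₀ hle)
          (by positivity) (by linarith [le_hingeSum a x])
    _ = 3 * hingeSum a x * hingeSum a y := by ring

theorem hingeSum_mul_le (ha : IsSqLacunary a) (hx : 1 ≤ x) (hy : 1 ≤ y) :
    hingeSum a (x * y) ≤ 3 * hingeSum a x * hingeSum a y := by
  rcases le_total x y with h | h
  · exact ha.hingeSum_mul_le_of_le hx h
  · simpa only [mul_comm y x, mul_right_comm] using ha.hingeSum_mul_le_of_le hy h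

theorem tendsto_hingeSum_div_atTop (ha : IsSqLacunary a) :
    Tendsto (fun x => hingeSum a x / x) atTop atTop := by
  refine tendsto_atTop.2 fun C => ?_
  obtain ⟨m, hm⟩ := exists_nat_ge (2 * C)
  filter_upwards [eventually_ge_atTop (a m)] with x hx
  have hx₀ : 0 < x := by linarith [ha.two_le m]
  rw [le_div_iff₀ hx₀]
  nlinarith [ha.le_hingeSum_of_le hx]

theorem hingeSum_div_mem_Icc (ha : IsSqLacunary a) {g : ℝ → ℝ}
    (hg : ∀ n x, a n ≤ x → ((n : ℝ) + 2) * 2 ^ n ≤ g x / x) {M : ℕ} (hx : a M ≤ x) :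
    hingeSum a x / g x ∈ Set.Icc 0 ((1 / 2) ^ M) := by
  obtain ⟨N, hle, hlt⟩ := ha.exists_forall_le_lt x
  have hMN : M < N := lt_of_not_ge fun h => (ha.monotone h).trans hx |>.not_gt hlt
  obtain ⟨m, rfl⟩ : ∃ m, N = m + 1 := ⟨N - 1, by omega⟩
  have hx₀ : 0 < x := by linarith [ha.two_le M]
  have hgx : ((m : ℝ) + 2) * 2 ^ m * x ≤ g x :=
    (le_div_iff₀ hx₀).1 (hg m x (hle m m.lt_succ_self))
  have hg₀ : 0 < g x := lt_of_lt_of_le (by positivity) hgx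
  have hf : hingeSum a x ≤ (m + 2) * x := by
    have := ha.hingeSum_le hx₀.le hlt
    push_cast at this
    linarith
  refine ⟨div_nonneg ((le_hingeSum a x).trans' hx₀.le) hg₀.le, (div_le_iff₀ hg₀).2 ?_⟩
  calc hingeSum a x ≤ (1 / 2) ^ m * (((m : ℝ) + 2) * 2 ^ m * x) := by
        rw [one_div_pow]; field_simp; exact hf
    _ ≤ (1 / 2) ^ M * g x :=
        mul_le_mul (pow_le_pow_of_le_one (by norm_num) (by norm_num) (by omega)) hgx
          (by positivity) (by positivity)

theorem tendsto_hingeSum_div (ha : IsSqLacunary a) {g : ℝ → ℝ}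
    (hg : ∀ n x, a n ≤ x → ((n : ℝ) + 2) * 2 ^ n ≤ g x / x) :
    Tendsto (fun x => hingeSum a x / g x) atTop (𝓝 0) := by
  refine Metric.tendsto_nhds.2 fun ε hε => ?_
  obtain ⟨M, hM⟩ := exists_pow_lt_of_lt_one hε (by norm_num : (1 / 2 : ℝ) < 1)
  filter_upwards [eventually_ge_atTop (a M)] with x hx
  obtain ⟨h₀, hle⟩ := ha.hingeSum_div_mem_Icc hg hx
  rw [Real.dist_0_eq_abs, abs_of_nonneg h₀]
  exact hle.trans_lt hM

end IsSqLacunary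

theorem MeasureTheory.Integrable.tsum_of_summable_integral_norm {α ι E : Type*}
    [MeasurableSpace α] {μ : Measure α} [Countable ι] [NormedAddCommGroup E] {F : ι → α → E}
    (hmeas : AEStronglyMeasurable (fun a => ∑' i, F i a) μ) (hF : ∀ i, Integrable (F i) μ)
    (hsum : Summable fun i => ∫ a, ‖F i a‖ ∂μ) : Integrable (fun a => ∑' i, F i a) μ := by
  refine ⟨hmeas, ?_⟩
  have hlt : ∑' i, ∫⁻ a, ‖F i a‖ₑ ∂μ < ⊤ := by
    simp_rw [← ofReal_integral_norm_eq_lintegral_enorm (hF _)]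
    rw [← ENNReal.ofReal_tsum_of_nonneg (fun i => integral_nonneg fun a => norm_nonneg _) hsum]
    exact ENNReal.ofReal_lt_top
  calc ∫⁻ a, ‖∑' i, F i a‖ₑ ∂μ ≤ ∫⁻ a, ∑' i, ‖F i a‖ₑ ∂μ :=
        lintegral_mono fun a => enorm_tsum_le_tsum_enorm
    _ = ∑' i, ∫⁻ a, ‖F i a‖ₑ ∂μ := lintegral_tsum fun i => (hF i).1.enorm
    _ < ⊤ := hlt

section Hinge

variable {Ω : Type*} [MeasurableSpace Ω] {μ : Measure Ω} {X : Ω → ℝ}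

theorem norm_max_sub_zero_le {x t : ℝ} (ht : 0 ≤ t) : ‖max (x - t) 0‖ ≤ ‖x‖ := by
  rw [Real.norm_of_nonneg (le_max_right _ _), Real.norm_eq_abs]
  exact max_le (by linarith [le_abs_self x]) (abs_nonneg x)

theorem MeasureTheory.Integrable.max_sub_const_zero (hX : Integrable X μ) {t : ℝ} (ht : 0 ≤ t) :
    Integrable (fun ω => max (X ω - t) 0) μ :=
  hX.mono ((hX.aemeasurable.sub_const t).max aemeasurable_const).aestronglyMeasurable
    (ae_of_all _ fun _ => norm_max_sub_zero_le ht)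

theorem tendsto_integral_max_sub_zero_atTop (hX : Integrable X μ) :
    Tendsto (fun t => ∫ ω, max (X ω - t) 0 ∂μ) atTop (𝓝 0) := by
  simpa using tendsto_integral_filter_of_dominated_convergence (fun ω => ‖X ω‖)
    (F := fun t ω => max (X ω - t) 0) (f := 0)
    ((eventually_ge_atTop 0).mono fun _ ht => (hX.max_sub_const_zero ht).1)
    ((eventually_ge_atTop 0).mono fun _ ht => ae_of_all _ fun _ => norm_max_sub_zero_le ht)
    hX.norm
    (ae_of_all _ fun ω => tendsto_const_nhds.congr'
      ((eventually_ge_atTop (X ω)).mono fun _ ht => (max_eq_right (by linarith)).symm))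

theorem IsSqLacunary.integrable_hingeSum_comp {a : ℕ → ℝ} (ha : IsSqLacunary a)
    (hX : Integrable X μ) (hsum : Summable fun n => ∫ ω, max (X ω - a n) 0 ∂μ) :
    Integrable (fun ω => hingeSum a (X ω)) μ :=
  hX.add <| Integrable.tsum_of_summable_integral_norm
    (ha.monotone_tsum_hinge.measurable.comp_aemeasurable hX.aemeasurable).aestronglyMeasurable
    (fun n => hX.max_sub_const_zero (ha.nonneg n))
    (by simpa only [Real.norm_of_nonneg (le_max_right _ (0 : ℝ))] using hsum)

end Hinge

theorem stmt6_general {Ω : Type*} [MeasurableSpace Ω] (μ : Measure Ω)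
    (X : Ω → ℝ) (hXint : Integrable X μ)
    (g : ℝ → ℝ)
    (hginf : Tendsto (fun x => g x / x) atTop atTop) :
    ∃ f : ℝ → ℝ,
      (∀ x ∈ Set.Ici (1 : ℝ), 0 < f x) ∧
      MonotoneOn f (Set.Ici 1) ∧
      ConvexOn ℝ (Set.Ici 1) f ∧
      Tendsto (fun x => f x / x) atTop atTop ∧
      Integrable (fun ω => f (X ω)) μ ∧
      Tendsto (fun x => f x / g x) atTop (nhds 0) ∧
      (∀ x y : ℝ, 1 ≤ x → 1 ≤ y → y * f x ≤ f (x * y) ∧ f (x * y) ≤ 3 * f x * f y) := by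
  have hG : ∀ n : ℕ, ∃ G, ∀ x ≥ G, ((n : ℝ) + 2) * 2 ^ n ≤ g x / x := fun n =>
    eventually_atTop.1 (hginf.eventually_ge_atTop _)
  have hT : ∀ n : ℕ, ∃ T, ∀ t ≥ T, ∫ ω, max (X ω - t) 0 ∂μ ≤ (1 / 2) ^ n := fun n =>
    eventually_atTop.1 ((tendsto_integral_max_sub_zero_atTop hXint).eventually
      (ge_mem_nhds (by positivity)))
  choose G hG using hG
  choose T hT using hT
  obtain ⟨a, ha, hGT⟩ := exists_isSqLacunary_ge fun n => max (G n) (T n)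
  have hsum : Summable fun n => ∫ ω, max (X ω - a n) 0 ∂μ :=
    summable_geometric_two.of_nonneg_of_le (fun _ => integral_nonneg fun _ => le_max_right _ _)
      fun n => hT n _ (le_of_max_le_right (hGT n))
  refine ⟨hingeSum a, fun x hx => (zero_lt_one.trans_le hx).trans_le (le_hingeSum a x),
    ha.monotone_hingeSum.monotoneOn _,
    ha.convexOn_hingeSum.subset (Set.subset_univ _) (convex_Ici 1),
    ha.tendsto_hingeSum_div_atTop, ha.integrable_hingeSum_comp hXint hsum,
    ha.tendsto_hingeSum_div fun n x hx => hG n x ((le_of_max_le_left (hGT n)).trans hx),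
    fun x y hx hy => ⟨ha.mul_hingeSum_le hy x, ha.hingeSum_mul_le hx hy⟩⟩

/-- strengthened de la Vallée–Poussin criterion. -/
theorem stmt6 {Ω : Type*} [MeasurableSpace Ω] (μ : Measure Ω) [IsProbabilityMeasure μ]
    (X : Ω → ℝ) (hX1 : ∀ ω, 1 ≤ X ω) (hXint : Integrable X μ)
    (g : ℝ → ℝ) (hg0 : ∀ x, 0 ≤ x → 0 ≤ g x) (hgmono : MonotoneOn g (Set.Ici 0))
    (hginf : Tendsto (fun x => g x / x) atTop atTop) :
    ∃ f : ℝ → ℝ,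
      (∀ x ∈ Set.Ici (1 : ℝ), 0 < f x) ∧
      MonotoneOn f (Set.Ici 1) ∧
      ConvexOn ℝ (Set.Ici 1) f ∧
      Tendsto (fun x => f x / x) atTop atTop ∧
      Integrable (fun ω => f (X ω)) μ ∧
      Tendsto (fun x => f x / g x) atTop (nhds 0) ∧
      (∀ x y : ℝ, 1 ≤ x → 1 ≤ y → y * f x ≤ f (x * y) ∧ f (x * y) ≤ 3 * f x * f y) :=
  stmt6_general μ X hXint g hginf
end

section
/- Let h : [0,∞) → (0,∞) solve the ODE h + h' = G' with h(0) = 1, where G is smooth, concave, increasing with G'(0) = 1. Then h is decreasing, satisfies h' ≥ −h, and the function G̃(x) = ∫₀ˣ h(t) dt satisfies: x ↦ x·G̃(log x) is convex on [1, ∞). -/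
open Set Filter

/-- A differentiable function antitone on `Ici 0` has nonpositive derivative at
interior points. -/
lemma aux_deriv_nonpos_of_antitoneOn {f : ℝ → ℝ} {x : ℝ} (hx : 0 < x)
    (hf : AntitoneOn f (Set.Ici 0)) (hd : DifferentiableAt ℝ f x) : deriv f x ≤ 0 := by
  have h := hd.hasDerivAt
  rw [hasDerivAt_iff_tendsto_slope] at h
  have h' : Tendsto (slope f x) (nhdsWithin x (Set.Ioi x)) (nhds (deriv f x)) :=
    h.mono_left (nhdsWithin_mono x fun y hy => ne_of_gt hy)
  refine le_of_tendsto h' ?_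
  filter_upwards [self_mem_nhdsWithin] with y hy
  have hxy : x < y := hy
  have hfy : f y ≤ f x := hf (le_of_lt hx) (le_of_lt (hx.trans hxy)) hxy.le
  rw [slope_def_field]
  have : (f y - f x) / (y - x) ≤ 0 :=
    div_nonpos_of_nonpos_of_nonneg (by linarith) (by linarith)
  simpa [div_eq_inv_mul] using this

/-- the solution `h` of `h + h' = G'` with `h(0) = 1`, for `G` smooth,
concave, increasing with `G'(0) = 1`, is decreasing, satisfies `h' ≥ −h`, and
`x ↦ x ∫₀^{log x} h` is convex on `[1, ∞)`. -/
theorem stmt7 (G h : ℝ → ℝ)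
    (hGsmooth : ContDiff ℝ (⊤ : ℕ∞) G) (hGconc : ConcaveOn ℝ (Set.Ici 0) G)
    (hGmono : MonotoneOn G (Set.Ici 0)) (hG'0 : deriv G 0 = 1)
    (hhdiff : Differentiable ℝ h) (hh0 : h 0 = 1) (hhpos : ∀ x ≥ (0 : ℝ), 0 < h x)
    (hODE : ∀ x ≥ (0 : ℝ), h x + deriv h x = deriv G x) :
    AntitoneOn h (Set.Ici 0) ∧ (∀ x ≥ (0 : ℝ), -h x ≤ deriv h x) ∧
    ConvexOn ℝ (Set.Ici 1) (fun x => x * ∫ t in (0 : ℝ)..(Real.log x), h t) := by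
  have hGd : Differentiable ℝ G := hGsmooth.differentiable (by simp)
  have hG'c : ContDiff ℝ ((⊤ : ℕ∞) : WithTop ℕ∞) (deriv G) :=
    (contDiff_infty_iff_deriv.mp (hGsmooth.of_le (by simp))).2
  have hG'd : Differentiable ℝ (deriv G) := hG'c.differentiable (by simp)
  -- deriv G is antitone on Ici 0
  have hG'anti : AntitoneOn (deriv G) (Set.Ici 0) :=
    hGconc.antitoneOn_deriv fun x _ => hGd x
  -- deriv G nonneg on Ici 0
  have hG'nonneg : ∀ x ≥ (0 : ℝ), 0 ≤ deriv G x := by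
    intro x hx
    have hmem : x ∈ Set.Ici (0 : ℝ) := hx
    have hmem' : x + 1 ∈ Set.Ici (0 : ℝ) := by simp only [Set.mem_Ici] at *; linarith
    have hs : slope G x (x + 1) ≤ deriv G x :=
      hGconc.slope_le_deriv hmem hmem' (lt_add_one x) (hGd x)
    have hGle : G x ≤ G (x + 1) := hGmono hmem hmem' (by linarith)
    have : (0:ℝ) ≤ slope G x (x + 1) := by
      rw [slope_def_field]
      have : (0:ℝ) ≤ (G (x+1) - G x) / (x + 1 - x) :=
        div_nonneg (by linarith) (by linarith)
      simpa [div_eq_inv_mul] using this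
    linarith
  -- deriv G ≤ 1 on Ici 0
  have hG'le1 : ∀ x ≥ (0 : ℝ), deriv G x ≤ 1 := by
    intro x hx
    have := hG'anti (Set.mem_Ici.mpr le_rfl) hx hx
    rwa [hG'0] at this
  -- the auxiliary function u = exp * (h - deriv G)
  set u : ℝ → ℝ := fun x => Real.exp x * (h x - deriv G x) with hu
  have hud : ∀ x : ℝ, HasDerivAt u
      (Real.exp x * (h x - deriv G x) + Real.exp x * (deriv h x - deriv (deriv G) x)) x := by
    intro x
    exact (Real.hasDerivAt_exp x).mul (((hhdiff x).hasDerivAt).sub ((hG'd x).hasDerivAt))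
  have hudiff : Differentiable ℝ u := fun x => (hud x).differentiableAt
  -- u is monotone on Ici 0
  have humono : MonotoneOn u (Set.Ici 0) := by
    apply monotoneOn_of_deriv_nonneg (convex_Ici 0) hudiff.continuous.continuousOn
      (hudiff.differentiableOn)
    intro x hx
    rw [interior_Ici] at hx
    have hx0 : (0:ℝ) < x := hx
    rw [(hud x).deriv]
    have hODEx := hODE x hx0.le
    have hG'' : deriv (deriv G) x ≤ 0 :=
      aux_deriv_nonpos_of_antitoneOn hx0 hG'anti (hG'd x)
    have hexp : (0:ℝ) < Real.exp x := Real.exp_pos x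
    nlinarith [Real.exp_pos x]
  -- hence h ≥ deriv G on Ici 0
  have hhG' : ∀ x ≥ (0 : ℝ), deriv G x ≤ h x := by
    intro x hx
    have := humono (Set.mem_Ici.mpr le_rfl) hx hx
    have hu0 : u 0 = 0 := by simp [hu, hh0, hG'0]
    rw [hu0] at this
    simp only [hu] at this
    have hexp : (0:ℝ) < Real.exp x := Real.exp_pos x
    nlinarith
  -- derivative of h is nonpositive on Ici 0
  have hh'nonpos : ∀ x ≥ (0 : ℝ), deriv h x ≤ 0 := by
    intro x hx
    have := hODE x hx
    have := hhG' x hx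
    linarith
  have hanti : AntitoneOn h (Set.Ici 0) := by
    apply antitoneOn_of_deriv_nonpos (convex_Ici 0) hhdiff.continuous.continuousOn
      hhdiff.differentiableOn
    intro x hx
    rw [interior_Ici] at hx
    exact hh'nonpos x (le_of_lt hx)
  refine ⟨hanti, ?_, ?_⟩
  · intro x hx
    have h1 := hODE x hx
    have h2 := hG'nonneg x hx
    linarith
  -- convexity part
  · have hhc : Continuous h := hhdiff.continuous
    set Gt : ℝ → ℝ := fun y => ∫ t in (0:ℝ)..y, h t with hGt
    have hGtd : ∀ y : ℝ, HasDerivAt Gt (h y) y := fun y =>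
      (hhc.integral_hasStrictDerivAt 0 y).hasDerivAt
    set F : ℝ → ℝ := fun x => x * Gt (Real.log x) with hF
    have hFd : ∀ x : ℝ, 0 < x → HasDerivAt F (Gt (Real.log x) + h (Real.log x)) x := by
      intro x hx
      have hlog : HasDerivAt Real.log x⁻¹ x := Real.hasDerivAt_log (ne_of_gt hx)
      have h1 : HasDerivAt (fun x => Gt (Real.log x)) (h (Real.log x) * x⁻¹) x :=
        (hGtd (Real.log x)).comp x hlog
      have h2 : HasDerivAt F (1 * Gt (Real.log x) + x * (h (Real.log x) * x⁻¹)) x :=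
        (hasDerivAt_id x).mul h1
      have hxne : x ≠ 0 := ne_of_gt hx
      have : 1 * Gt (Real.log x) + x * (h (Real.log x) * x⁻¹)
          = Gt (Real.log x) + h (Real.log x) := by
        field_simp
      rwa [this] at h2
    -- g = Gt + h is monotone on Ici 0
    have hgd : ∀ y : ℝ, HasDerivAt (fun y => Gt y + h y) (h y + deriv h y) y := fun y =>
      (hGtd y).add (hhdiff y).hasDerivAt
    have hgdiff : Differentiable ℝ (fun y => Gt y + h y) := fun y => (hgd y).differentiableAt
    have hgmono : MonotoneOn (fun y => Gt y + h y) (Set.Ici 0) := by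
      apply monotoneOn_of_deriv_nonneg (convex_Ici 0) hgdiff.continuous.continuousOn
        hgdiff.differentiableOn
      intro y hy
      rw [interior_Ici] at hy
      have hy0 : (0:ℝ) < y := hy
      rw [(hgd y).deriv, hODE y hy0.le]
      exact hG'nonneg y hy0.le
    -- deriv F is monotone on the interior of Ici 1
    have hF'mono : MonotoneOn (deriv F) (interior (Set.Ici (1:ℝ))) := by
      rw [interior_Ici]
      intro x hx y hy hxy
      have hx1 : (1:ℝ) < x := hx
      have hy1 : (1:ℝ) < y := hy
      have hx0 : (0:ℝ) < x := by linarith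
      have hy0 : (0:ℝ) < y := by linarith
      rw [(hFd x hx0).deriv, (hFd y hy0).deriv]
      have hlx : (0:ℝ) ≤ Real.log x := Real.log_nonneg hx1.le
      have hly : (0:ℝ) ≤ Real.log y := Real.log_nonneg hy1.le
      exact hgmono hlx hly (Real.log_le_log hx0 hxy)
    exact MonotoneOn.convexOn_of_deriv (convex_Ici 1)
      (fun x hx => (hFd x (by exact lt_of_lt_of_le one_pos hx)).continuousAt.continuousWithinAt)
      (by
        rw [interior_Ici]
        exact fun x hx =>
          (hFd x (lt_trans one_pos hx)).differentiableAt.differentiableWithinAt)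
      hF'mono
end

section
/- Suppose a probability measure μ on point configurations satisfies μ[N_Δ^k]^{1/k} ≤ c₃ c₂^{|Δ|/k} k / log(1 + k/(c₁|Δ|)) for all bounded Δ and k ∈ ℕ, and let ν be obtained from μ by adding an independent Poisson process with intensity measure bounded by t‖b‖_∞ (points born in time t with rate at most ‖b‖_∞). Then ν[N_Δ^k]^{1/k} ≤ (c₃+1) c₂^{|Δ|/k} k / log(1 + k/(max{c₁, t‖b‖_∞}|Δ|)) for all bounded Δ and k ∈ ℕ. -/
/-!
By Minkowski's inequality the `L^k` norm of `X + Y` is at most that of `X` plus that of `Y`.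
For a Poisson count `Y` of mean `λ`, the Chernoff-type bound `n ^ k ≤ (k / s) ^ k e ^ (s n - k)`
and the exponential moment `E e ^ (s Y) = e ^ (λ (e ^ s - 1))`, taken at `s = log (1 + k / λ)`
where `λ (e ^ s - 1) = k`, give `‖Y‖_k ≤ k / log (1 + k / λ)`. Since `x ↦ k / log (1 + k / x)` is
increasing, both `c₁ |Δ|` and `λ ≤ t b |Δ|` may be replaced by `max c₁ (t b) |Δ|`.

The counts are not assumed measurable; it suffices that the Poisson count is dominated by a
measurable function with the same moments, since Minkowski's inequality only needs one
measurable summand.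
-/

open MeasureTheory ProbabilityTheory ENNReal

open scoped NNReal Nat

theorem Real.pow_le_div_pow_mul_exp {s x : ℝ} (hs : 0 < s) (hx : 0 ≤ x) {k : ℕ} (hk : 0 < k) :
    x ^ k ≤ (k / s) ^ k * Real.exp (s * x - k) := by
  have hk' : (0 : ℝ) < k := by exact_mod_cast hk
  calc x ^ k = (k / s) ^ k * (s * x / k) ^ k := by
        rw [← mul_pow]; congr 1; field_simp
    _ ≤ (k / s) ^ k * Real.exp (s * x / k - 1) ^ k := by
        gcongr; linarith [Real.add_one_le_exp (s * x / k - 1)]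
    _ = (k / s) ^ k * Real.exp (s * x - k) := by
        rw [← Real.exp_nat_mul]; congr 2; field_simp

theorem hasSum_poissonMeasure_mul_exp (r : ℝ≥0) (s : ℝ) :
    HasSum (fun n : ℕ ↦ Real.exp (-r) * r ^ n / n ! * Real.exp (s * n))
      (Real.exp (r * (Real.exp s - 1))) := by
  have h := (NormedSpace.expSeries_div_hasSum_exp ((r : ℝ) * Real.exp s)).mul_left
    (Real.exp (-r))
  rw [← Real.exp_eq_exp_ℝ, ← Real.exp_add] at h
  rw [show (r : ℝ) * (Real.exp s - 1) = -r + r * Real.exp s by ring]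
  refine h.congr_fun fun n ↦ ?_
  rw [mul_pow, ← Real.exp_nat_mul, mul_comm s]
  ring

theorem lintegral_exp_mul_poissonMeasure (r : ℝ≥0) (s : ℝ) :
    ∫⁻ n, ENNReal.ofReal (Real.exp (s * n)) ∂poissonMeasure r
      = ENNReal.ofReal (Real.exp (r * (Real.exp s - 1))) := by
  have h := hasSum_poissonMeasure_mul_exp r s
  rw [lintegral_countable', ← h.tsum_eq, ENNReal.ofReal_tsum_of_nonneg
    (fun n ↦ by positivity) h.summable]
  refine tsum_congr fun n ↦ ?_
  rw [poissonMeasure_singleton, ← ENNReal.ofReal_mul (by positivity), mul_comm]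

theorem lintegral_pow_poissonMeasure_le {r : ℝ≥0} (hr : 0 < r) {k : ℕ} (hk : 0 < k) :
    ∫⁻ n, (n : ℝ≥0∞) ^ k ∂poissonMeasure r
      ≤ ENNReal.ofReal (k / Real.log (1 + k / r)) ^ k := by
  set s := Real.log (1 + k / r)
  have hs : 0 < s := Real.log_pos (by simp; positivity)
  have hrs : (r : ℝ) * (Real.exp s - 1) = k := by
    rw [Real.exp_log (by positivity)]; field_simp; ring
  calc ∫⁻ n, (n : ℝ≥0∞) ^ k ∂poissonMeasure r
      ≤ ∫⁻ n : ℕ, ENNReal.ofReal ((k / s) ^ k * Real.exp (-k)) *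
          ENNReal.ofReal (Real.exp (s * n)) ∂poissonMeasure r := by
        refine lintegral_mono fun n ↦ ?_
        rw [← ENNReal.ofReal_mul (by positivity), mul_assoc, ← Real.exp_add, ← ofReal_natCast,
          ← ENNReal.ofReal_pow (Nat.cast_nonneg n), neg_add_eq_sub]
        exact ENNReal.ofReal_le_ofReal (Real.pow_le_div_pow_mul_exp hs (Nat.cast_nonneg n) hk)
    _ = ENNReal.ofReal (k / s) ^ k := by
        rw [lintegral_const_mul _ (by fun_prop), lintegral_exp_mul_poissonMeasure, hrs,
          ← ENNReal.ofReal_mul (by positivity), mul_assoc, ← Real.exp_add, neg_add_cancel,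
          Real.exp_zero, mul_one, ENNReal.ofReal_pow (by positivity)]

section Minkowski

variable {α : Type*} [MeasurableSpace α] (μ : Measure α)

theorem exists_measurable_ge_lintegral_rpow_eq (g : α → ℕ) {p : ℝ} (hp : 0 < p) :
    ∃ G : α → ℝ≥0∞, Measurable G ∧ (∀ a, (g a : ℝ≥0∞) ≤ G a) ∧
      ∫⁻ a, G a ^ p ∂μ = ∑' n : ℕ, (n : ℝ≥0∞) ^ p * μ {a | g a = n} := by
  set B := fun n : ℕ ↦ toMeasurable μ {a | g a = n}
  set F := fun a ↦ ∑' n : ℕ, (B n).indicator (fun _ ↦ (n : ℝ≥0∞) ^ p) a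
  have hB : ∀ n, MeasurableSet (B n) := fun n ↦ measurableSet_toMeasurable _ _
  have hF : Measurable F := Measurable.tsum fun n ↦ measurable_const.indicator (hB n)
  refine ⟨fun a ↦ F a ^ p⁻¹, hF.pow_const _, fun a ↦ ?_, ?_⟩
  · rw [← ENNReal.rpow_le_rpow_iff hp, ENNReal.rpow_inv_rpow hp.ne']
    refine le_of_eq_of_le ?_ (ENNReal.le_tsum (g a))
    rw [Set.indicator_of_mem (subset_toMeasurable μ {b | g b = g a} rfl)]
  · simp_rw [ENNReal.rpow_inv_rpow hp.ne', F]
    rw [lintegral_tsum fun n ↦ (measurable_const.indicator (hB n)).aemeasurable]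
    simp_rw [lintegral_indicator_const (hB _), B, measure_toMeasurable]

variable {μ}

theorem lintegral_Lp_add_le_of_measurable_right {f g : α → ℝ≥0∞} (hg : Measurable g) {p : ℝ}
    (hp : 1 ≤ p) :
    (∫⁻ a, (f a + g a) ^ p ∂μ) ^ (1 / p)
      ≤ (∫⁻ a, f a ^ p ∂μ) ^ (1 / p) + (∫⁻ a, g a ^ p ∂μ) ^ (1 / p) := by
  have hp0 : 0 < p := zero_lt_one.trans_le hp
  obtain ⟨F, hFm, hFle, hFeq⟩ := exists_measurable_le_lintegral_eq μ fun a ↦ (f a + g a) ^ p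
  set h := fun a ↦ F a ^ p⁻¹ - g a
  have hh : Measurable h := (hFm.pow_const _).sub hg
  have hhf : ∀ a, h a ≤ f a := fun a ↦ tsub_le_iff_right.2 <| by
    rw [← ENNReal.rpow_le_rpow_iff hp0, ENNReal.rpow_inv_rpow hp0.ne']
    exact hFle a
  calc (∫⁻ a, (f a + g a) ^ p ∂μ) ^ (1 / p) = (∫⁻ a, F a ∂μ) ^ (1 / p) := by rw [hFeq]
    _ ≤ (∫⁻ a, (h a + g a) ^ p ∂μ) ^ (1 / p) := by
        gcongr with a
        rw [← ENNReal.rpow_inv_rpow hp0.ne' (F a)]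
        gcongr
        exact le_tsub_add
    _ ≤ (∫⁻ a, h a ^ p ∂μ) ^ (1 / p) + (∫⁻ a, g a ^ p ∂μ) ^ (1 / p) :=
        ENNReal.lintegral_Lp_add_le hh.aemeasurable hg.aemeasurable hp
    _ ≤ _ := by gcongr with a; exact hhf a

theorem lintegral_add_pow_rpow_le_of_poisson (f : α → ℝ≥0∞) (Y : α → ℕ) {r : ℝ≥0} (hr : 0 < r)
    (hY : ∀ n, μ {a | Y a = n} = poissonMeasure r {n}) {k : ℕ} (hk : 1 ≤ k) :
    (∫⁻ a, (f a + Y a) ^ k ∂μ) ^ (1 / k : ℝ)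
      ≤ (∫⁻ a, f a ^ k ∂μ) ^ (1 / k : ℝ) + ENNReal.ofReal (k / Real.log (1 + k / r)) := by
  obtain ⟨G, hGm, hYG, hGk⟩ :=
    exists_measurable_ge_lintegral_rpow_eq μ Y (p := k) (by positivity)
  have hG : (∫⁻ a, G a ^ (k : ℝ) ∂μ) ^ (1 / k : ℝ)
      ≤ ENNReal.ofReal (k / Real.log (1 + k / r)) := by
    simp_rw [hGk, hY, ENNReal.rpow_natCast]
    rw [← lintegral_countable']
    calc _ ≤ (ENNReal.ofReal (k / Real.log (1 + k / r)) ^ k) ^ (1 / k : ℝ) := by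
          gcongr; exact lintegral_pow_poissonMeasure_le hr hk
      _ = _ := by rw [one_div, ENNReal.pow_rpow_inv_natCast (by omega)]
  simp_rw [← ENNReal.rpow_natCast]
  calc _ ≤ (∫⁻ a, (f a + G a) ^ (k : ℝ) ∂μ) ^ (1 / k : ℝ) := by
        gcongr with a; exact hYG a
    _ ≤ _ := lintegral_Lp_add_le_of_measurable_right hGm (by exact_mod_cast hk)
    _ ≤ _ := by gcongr

end Minkowski

theorem div_log_one_add_div_le {a x y : ℝ} (ha : 0 < a) (hx : 0 < x) (hxy : x ≤ y) :
    a / Real.log (1 + a / x) ≤ a / Real.log (1 + a / y) := by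
  have hy : 0 < y := hx.trans_le hxy
  refine div_le_div_of_nonneg_left ha.le (Real.log_pos (by simp; positivity)) ?_
  gcongr

theorem ENNReal.toReal_le_add_of_le {a b c : ℝ≥0∞} (hba : b ≤ a) (habc : a ≤ b + c)
    (hc : c ≠ ⊤) : a.toReal ≤ b.toReal + c.toReal := by
  rcases eq_or_ne a ⊤ with rfl | ha
  · simp only [toReal_top]; positivity
  rw [← ENNReal.toReal_add (ne_top_of_le_ne_top ha hba) hc]
  exact ENNReal.toReal_mono (add_ne_top.2 ⟨ne_top_of_le_ne_top ha hba, hc⟩) habc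

/-- `X ω Δ` and `Y ω Δ` count the points in `Δ` of the original configuration and of the added
Poisson points, so that the counts under `ν` are `X ω Δ + Y ω Δ`. -/
theorem stmt19_general (d : ℕ) {Ω : Type*} [MeasurableSpace Ω] (P : Measure Ω)
    (c₁ c₂ c₃ t b : ℝ)
    (hc₁ : 1 ≤ c₁) (hc₂ : 1 ≤ c₂) (hc₃ : 1 ≤ c₃)
    (X Y : Ω → Set (Fin d → ℝ) → ℕ)
    -- moment bounds for the original process
    (hX : ∀ Δ : Set (Fin d → ℝ), MeasurableSet Δ → 0 < volume Δ → volume Δ < ⊤ →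
      ∀ k : ℕ, 1 ≤ k →
        ((∫⁻ ω, (X ω Δ : ℝ≥0∞) ^ k ∂P).toReal) ^ ((1 : ℝ) / k)
          ≤ c₃ * c₂ ^ ((volume Δ).toReal / k) * k
              / Real.log (1 + k / (c₁ * (volume Δ).toReal)))
    -- the added points form an independent Poisson process with intensity at most `t b`
    (hY : ∀ Δ : Set (Fin d → ℝ), MeasurableSet Δ → 0 < volume Δ → volume Δ < ⊤ →
      ∃ lamΔ : ℝ, 0 < lamΔ ∧ lamΔ ≤ t * b * (volume Δ).toReal ∧
        ∀ n : ℕ, P {ω | Y ω Δ = n}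
          = ENNReal.ofReal (Real.exp (-lamΔ) * lamΔ ^ n / n.factorial)) :
    ∀ Δ : Set (Fin d → ℝ), MeasurableSet Δ → 0 < volume Δ → volume Δ < ⊤ →
      ∀ k : ℕ, 1 ≤ k →
        ((∫⁻ ω, ((X ω Δ : ℝ≥0∞) + (Y ω Δ : ℝ≥0∞)) ^ k ∂P).toReal) ^ ((1 : ℝ) / k)
          ≤ (c₃ + 1) * c₂ ^ ((volume Δ).toReal / k) * k
              / Real.log (1 + k / (max c₁ (t * b) * (volume Δ).toReal)) := by
  intro Δ hΔ hV0 hVtop k hk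
  obtain ⟨lam, hlam, hlamle, hlaw⟩ := hY Δ hΔ hV0 hVtop
  set V := (volume Δ).toReal
  have hV : 0 < V := ENNReal.toReal_pos hV0.ne' hVtop.ne
  have hk0 : (0 : ℝ) < k := by exact_mod_cast hk
  have hC : 1 ≤ c₂ ^ (V / k) := Real.one_le_rpow hc₂ (by positivity)
  have hpoisson : ∀ n, P {ω | Y ω Δ = n} = poissonMeasure lam.toNNReal {n} := fun n ↦ by
    rw [poissonMeasure_singleton, Real.coe_toNNReal _ hlam.le, hlaw]
  have hMink := lintegral_add_pow_rpow_le_of_poisson (fun ω ↦ (X ω Δ : ℝ≥0∞)) (Y · Δ)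
    (Real.toNNReal_pos.2 hlam) hpoisson hk
  rw [Real.coe_toNNReal _ hlam.le] at hMink
  have hB : 0 ≤ k / Real.log (1 + k / lam) :=
    div_nonneg hk0.le (Real.log_nonneg (by simp; positivity))
  have hsplit := ENNReal.toReal_le_add_of_le (by gcongr; exact le_self_add) hMink ofReal_ne_top
  rw [← toReal_rpow, ← toReal_rpow, toReal_ofReal hB] at hsplit
  calc _ ≤ c₃ * c₂ ^ (V / k) * (k / Real.log (1 + k / (c₁ * V)))
        + c₂ ^ (V / k) * (k / Real.log (1 + k / lam)) := by
        rw [← mul_div_assoc]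
        exact hsplit.trans (add_le_add (hX Δ hΔ hV0 hVtop k hk) (le_mul_of_one_le_left hB hC))
    _ ≤ c₃ * c₂ ^ (V / k) * (k / Real.log (1 + k / (max c₁ (t * b) * V)))
        + c₂ ^ (V / k) * (k / Real.log (1 + k / (max c₁ (t * b) * V))) := by
        have hc₁M : c₁ * V ≤ max c₁ (t * b) * V := by gcongr; exact le_max_left _ _
        have hlamM : lam ≤ max c₁ (t * b) * V :=
          hlamle.trans (by gcongr; exact le_max_right _ _)
        gcongr ?_ * ?_ + ?_ * ?_
        · exact div_log_one_add_div_le hk0 (by positivity) hc₁M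
        · exact div_log_one_add_div_le hk0 hlam hlamM
    _ = _ := by ring

/-- moment bounds of Poisson type are stable under adding an independent
Poisson process with intensity measure bounded by `t‖b‖_∞` times Lebesgue measure.
Here `X ω Δ` are the counts of the original process (distributed according to `μ`),
`Y ω Δ` the counts of the added independent Poisson points (Poisson with parameter
at most `t‖b‖_∞ |Δ|`), and the counts of the evolved process `ν = μ T_t` are
`X ω Δ + Y ω Δ`. -/
theorem stmt19 (d : ℕ) {Ω : Type*} [MeasurableSpace Ω] (P : Measure Ω)
    [IsProbabilityMeasure P] (c₁ c₂ c₃ t b : ℝ)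
    (hc₁ : 1 ≤ c₁) (hc₂ : 1 ≤ c₂) (hc₃ : 1 ≤ c₃) (ht : 0 < t) (hb : 0 < b)
    (X Y : Ω → Set (Fin d → ℝ) → ℕ)
    -- moment bounds for the original process
    (hX : ∀ Δ : Set (Fin d → ℝ), MeasurableSet Δ → 0 < volume Δ → volume Δ < ⊤ →
      ∀ k : ℕ, 1 ≤ k →
        ((∫⁻ ω, (X ω Δ : ℝ≥0∞) ^ k ∂P).toReal) ^ ((1 : ℝ) / k)
          ≤ c₃ * c₂ ^ ((volume Δ).toReal / k) * k
              / Real.log (1 + k / (c₁ * (volume Δ).toReal)))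
    -- the added points form an independent Poisson process with intensity at most `t b`
    (hY : ∀ Δ : Set (Fin d → ℝ), MeasurableSet Δ → 0 < volume Δ → volume Δ < ⊤ →
      ∃ lamΔ : ℝ, 0 < lamΔ ∧ lamΔ ≤ t * b * (volume Δ).toReal ∧
        ∀ n : ℕ, P {ω | Y ω Δ = n}
          = ENNReal.ofReal (Real.exp (-lamΔ) * lamΔ ^ n / n.factorial))
    (hindep : ∀ Δ : Set (Fin d → ℝ), MeasurableSet Δ →
      IndepFun (fun ω => X ω Δ) (fun ω => Y ω Δ) P) :
    ∀ Δ : Set (Fin d → ℝ), MeasurableSet Δ → 0 < volume Δ → volume Δ < ⊤ →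
      ∀ k : ℕ, 1 ≤ k →
        ((∫⁻ ω, ((X ω Δ : ℝ≥0∞) + (Y ω Δ : ℝ≥0∞)) ^ k ∂P).toReal) ^ ((1 : ℝ) / k)
          ≤ (c₃ + 1) * c₂ ^ ((volume Δ).toReal / k) * k
              / Real.log (1 + k / (max c₁ (t * b) * (volume Δ).toReal)) :=
  stmt19_general d P c₁ c₂ c₃ t b hc₁ hc₂ hc₃ X Y hX hY
end
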